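/- arXiv:1806.08535 — 2 statements merged into one kernel-verified Lean document; each statement's English description precedes it below -/
import Mathlib

section
/- (Almost-sure merging) Consider the random transmission model on a static strongly connected digraph G = (V, E) with n = |V| ≥ 2 nodes. Let z_j[0] = 1 for every node j and z_l[k+1] = ∑_{j : f_k(j) = l} z_j[k], where (f_k) is the i.i.d. sequence of random transmission functions of the model. Then almost surely there exist a finite time k₀ and a node j₀ such that z_{j₀}[k₀] = n (and hence z_i[k₀] = 0 for all i ≠ j₀), i.e., all mass merges at a single node in finite time with probability one. -/
/-!
Strong connectivity gives a single transmission map `g` (every node keeps its mass or passes it one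
step along a shortest path to a fixed node `v₀`) whose `T`-th iterate sends every node to `v₀`.
If all nodes follow `g` during `T` consecutive steps, the whole mass, which is conserved, ends up
at `v₀`. This happens in a fixed block of `T` steps with a positive probability that does not depend
on the block, and the blocks `[M T, M T + T)` are independent, so by the second Borel–Cantelli lemma
it happens in some block almost surely.
-/

open MeasureTheory ProbabilityTheory Filter Function
open scoped ENNReal

section Reachability

variable {α : Type*} {r : α → α → Prop} {v : α}

theorem exists_map_exists_iterate_eq_of_reflTransGen (h : ∀ a, Relation.ReflTransGen r a v) :
    ∃ g : α → α, g v = v ∧ (∀ a, g a = a ∨ r a (g a)) ∧ ∀ a, ∃ m, g^[m] a = v := by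
  classical
  have hpath : ∀ a, ∃ m, ∃ l : List α, l.length = m ∧ (a :: l).IsChain r ∧
      (a :: l).getLast (List.cons_ne_nil _ _) = v := fun a => by
    obtain ⟨l, hl, hlast⟩ := List.exists_isChain_cons_of_relationReflTransGen (h a)
    exact ⟨_, l, rfl, hl, hlast⟩
  let d a := Nat.find (hpath a)
  have hcloser : ∀ a, a ≠ v → ∃ b, r a b ∧ d b < d a := by
    intro a ha
    obtain ⟨l, hlen, hl, hlast⟩ : ∃ l : List α, l.length = d a ∧ (a :: l).IsChain r ∧
        (a :: l).getLast (List.cons_ne_nil _ _) = v := Nat.find_spec (hpath a)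
    cases l with
    | nil => exact absurd hlast ha
    | cons b l =>
      rw [List.isChain_cons_cons] at hl
      have hdb : d b ≤ l.length := Nat.find_min' _ ⟨l, rfl, hl.2, by simpa using hlast⟩
      exact ⟨b, hl.1, by simp only [List.length_cons] at hlen; omega⟩
  choose! next hnext using hcloser
  refine ⟨update next v v, by simp, fun a => ?_, fun a => ?_⟩
  · by_cases ha : a = v
    · simp [ha]
    · simp [ha, (hnext a ha).1]
  · induction hda : d a using Nat.strong_induction_on generalizing a with
    | _ k ih =>
      by_cases ha : a = v
      · exact ⟨0, ha⟩
      · obtain ⟨m, hm⟩ := ih _ (hda ▸ (hnext a ha).2) (next a) rfl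
        exact ⟨m + 1, by rwa [iterate_succ_apply, update_of_ne ha]⟩

theorem exists_map_iterate_eq_of_reflTransGen [Finite α] (h : ∀ a, Relation.ReflTransGen r a v) :
    ∃ (g : α → α) (T : ℕ), (∀ a, g a = a ∨ r a (g a)) ∧ ∀ a, g^[T] a = v := by
  obtain ⟨g, hgv, hg, hreach⟩ := exists_map_exists_iterate_eq_of_reflTransGen h
  choose m hm using hreach
  obtain ⟨T, hT⟩ := Finite.bddAbove_range m
  refine ⟨g, T, hg, fun a => ?_⟩
  obtain ⟨k, hk⟩ := Nat.exists_eq_add_of_le (hT (Set.mem_range_self a))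
  rw [hk, add_comm, iterate_add_apply, hm, iterate_fixed hgv]

end Reachability

section PushMass

variable {V M : Type*} [Fintype V] [DecidableEq V] [AddCommMonoid M]

def pushMass (g : V → V) (x : V → M) (l : V) : M :=
  ∑ j ∈ Finset.univ.filter (fun j => g j = l), x j

theorem sum_pushMass (g : V → V) (x : V → M) : ∑ l, pushMass g x l = ∑ j, x j :=
  Finset.sum_fiberwise _ _ _

theorem pushMass_id (x : V → M) : pushMass id x = x := by
  ext l
  simp [pushMass, Finset.filter_eq']

theorem pushMass_pushMass (g h : V → V) (x : V → M) :
    pushMass g (pushMass h x) = pushMass (g ∘ h) x := by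
  ext l
  simp only [pushMass]
  rw [Finset.sum_fiberwise_eq_sum_filter]
  simp

theorem pushMass_of_forall_eq {g : V → V} {v : V} (hg : ∀ j, g j = v) (x : V → M) :
    pushMass g x = Pi.single v (∑ j, x j) := by
  ext l
  by_cases hl : l = v
  · subst hl
    simp [pushMass, hg]
  · simp [pushMass, hg, hl, Ne.symm hl]

variable {x : ℕ → V → M} {F : ℕ → V → V}

theorem sum_eq_sum_zero_of_eq_pushMass (hx : ∀ k, x (k + 1) = pushMass (F k) (x k)) (k : ℕ) :
    ∑ j, x k j = ∑ j, x 0 j := by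
  induction k with
  | zero => rfl
  | succ k ih => rw [hx, sum_pushMass, ih]

theorem eq_pushMass_iterate_of_eq (hx : ∀ k, x (k + 1) = pushMass (F k) (x k)) {g : V → V}
    {k T : ℕ} (hF : ∀ t < T, F (k + t) = g) : x (k + T) = pushMass g^[T] (x k) := by
  induction T with
  | zero => exact (pushMass_id _).symm
  | succ T ih =>
    rw [← add_assoc, hx, hF T T.lt_succ_self, ih fun t ht => hF t (by omega), pushMass_pushMass,
      iterate_succ']

end PushMass

section Independence

variable {Ω : Type*} [MeasurableSpace Ω] {μ : Measure Ω}

theorem ProbabilityTheory.iIndepFun.iIndepSet_biInter_preimage {ι κ : Type*} {β : ι → Type*}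
    [∀ i, MeasurableSpace (β i)] {X : ∀ i, Ω → β i} (hX : iIndepFun X μ)
    (hXm : ∀ i, Measurable (X i)) {t : ∀ i, Set (β i)} (ht : ∀ i, MeasurableSet (t i))
    {S : κ → Finset ι} (hS : Pairwise (Disjoint on S)) :
    iIndepSet (fun m => ⋂ i ∈ S m, X i ⁻¹' t i) μ := by
  classical
  rw [iIndepSet_iff_meas_biInter fun m => Finset.measurableSet_biInter _ fun i _ => hXm i (ht i)]
  intro s
  rw [← Finset.set_biInter_biUnion, hX.measure_inter_preimage_eq_mul _ fun i _ => ht i,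
    Finset.prod_biUnion (hS.set_pairwise _)]
  exact Finset.prod_congr rfl fun m _ => (hX.measure_inter_preimage_eq_mul _ fun i _ => ht i).symm

theorem ae_exists_mem_of_iIndepSet [IsProbabilityMeasure μ] {s : ℕ → Set Ω}
    (hsm : ∀ n, MeasurableSet (s n)) (hs : iIndepSet s μ) {c : ℝ≥0∞} (hc : c ≠ 0)
    (hcs : ∀ n, c ≤ μ (s n)) : ∀ᵐ ω ∂μ, ∃ n, ω ∈ s n := by
  have hsum : ∑' n, μ (s n) = ∞ :=
    top_unique ((ENNReal.tsum_const_eq_top_of_ne_zero hc).ge.trans (ENNReal.tsum_le_tsum hcs))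
  have hlimsup : ∀ᵐ ω ∂μ, ω ∈ limsup s atTop :=
    (mem_ae_iff_prob_eq_one (MeasurableSet.measurableSet_limsup hsm)).2
      (measure_limsup_eq_one hsm hs hsum)
  filter_upwards [hlimsup] with ω hω
  exact (mem_limsup_iff_frequently_mem.1 hω).exists

end Independence

section Blocks

variable {Ω V : Type*} [MeasurableSpace Ω] {μ : Measure Ω} [IsProbabilityMeasure μ]
  [Fintype V] [MeasurableSpace V] [MeasurableSingletonClass V]

theorem ae_exists_block_eq {f : ℕ → Ω → V → V} (hMeas : ∀ k j, Measurable fun ω => f k ω j)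
    (hIndep : iIndepFun (fun p : ℕ × V => fun ω => f p.1 ω p.2) μ) {g : V → V} {q : V → ℝ≥0∞}
    (hq : ∀ j, q j ≠ 0) (hfq : ∀ k j, μ {ω | f k ω j = g j} = q j) (T : ℕ) :
    ∀ᵐ ω ∂μ, ∃ M, ∀ t < T, f (M * T + t) ω = g := by
  let block (M : ℕ) : Finset (ℕ × V) := Finset.Ico (M * T) (M * T + T) ×ˢ Finset.univ
  have hblock_div : ∀ M, ∀ p ∈ block M, p.1 / T = M := by
    intro M p hp
    simp only [block, Finset.mem_product, Finset.mem_Ico] at hp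
    exact Nat.div_eq_of_lt_le hp.1.1 (by rw [add_one_mul]; exact hp.1.2)
  have hdisj : Pairwise (Disjoint on block) := fun M M' hne =>
    Finset.disjoint_left.2 fun p hp hp' => hne ((hblock_div M p hp).symm.trans (hblock_div M' p hp'))
  let X (p : ℕ × V) (ω : Ω) : V := f p.1 ω p.2
  have hXm : ∀ p, Measurable (X p) := fun p => hMeas p.1 p.2
  have hsingle : ∀ p : ℕ × V, MeasurableSet {g p.2} := fun _ => measurableSet_singleton _
  have hprob : ∀ M, μ (⋂ p ∈ block M, X p ⁻¹' {g p.2}) = (∏ j, q j) ^ T := by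
    intro M
    calc μ (⋂ p ∈ block M, X p ⁻¹' {g p.2}) = ∏ p ∈ block M, q p.2 := by
          rw [hIndep.measure_inter_preimage_eq_mul _ fun p _ => hsingle p]
          exact Finset.prod_congr rfl fun p _ => hfq p.1 p.2
      _ = (∏ j, q j) ^ T := by simp [block, Finset.prod_product]
  have hblocks := ae_exists_mem_of_iIndepSet
    (fun M => Finset.measurableSet_biInter _ fun p _ => hXm p (hsingle p))
    (hIndep.iIndepSet_biInter_preimage hXm hsingle hdisj)
    (pow_ne_zero T (Finset.prod_ne_zero_iff.2 fun j _ => hq j)) fun M => (hprob M).ge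
  filter_upwards [hblocks] with ω ⟨M, hM⟩
  refine ⟨M, fun t ht => funext fun j => ?_⟩
  simp only [Set.mem_iInter] at hM
  exact hM (M * T + t, j) (by simp [block, ht])

end Blocks

theorem almost_sure_merging_general
    {V : Type*} [Fintype V] [DecidableEq V] [MeasurableSpace V]
    [MeasurableSingletonClass V]
    {n : ℕ} (hcard : Fintype.card V = n) (hn : 2 ≤ n)
    (Nplus : V → Finset V)                      -- out-neighborhoods
    (hsc : ∀ a b : V, Relation.ReflTransGen (fun u v => v ∈ Nplus u) a b)
    {Ω : Type*} [MeasurableSpace Ω] (μ : Measure Ω) [IsProbabilityMeasure μ]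
    (f : ℕ → Ω → V → V)                          -- random transmission functions
    (hMeas : ∀ k j, Measurable (fun ω => f k ω j))
    (hIndep : iIndepFun (fun p : ℕ × V => fun ω => f p.1 ω p.2) μ)
    (hDist : ∀ k (j l : V),
      μ {ω | f k ω j = l} =
        if l ∈ insert j (Nplus j) then (1 : ENNReal) / (1 + (Nplus j).card) else 0)
    (z : ℕ → Ω → V → ℕ)
    (hz0 : ∀ ω j, z 0 ω j = 1)
    (hzrec : ∀ k ω l,
      z (k + 1) ω l = ∑ j ∈ Finset.univ.filter (fun j => f k ω j = l), z k ω j) :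
    ∀ᵐ ω ∂μ, ∃ k₀ : ℕ, ∃ j₀ : V,
      z k₀ ω j₀ = n ∧ ∀ i, i ≠ j₀ → z k₀ ω i = 0 := by
  obtain ⟨v₀⟩ : Nonempty V := Fintype.card_pos_iff.mp (by omega)
  obtain ⟨g, T, hg, hgT⟩ := exists_map_iterate_eq_of_reflTransGen fun a => hsc a v₀
  have hfg : ∀ k j, μ {ω | f k ω j = g j} = 1 / (1 + (Nplus j).card) := fun k j => by
    rw [hDist, if_pos (Finset.mem_insert.2 (hg j))]
  have hz : ∀ ω k, z (k + 1) ω = pushMass (f k ω) (z k ω) := fun ω k => funext (hzrec k ω)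
  filter_upwards [ae_exists_block_eq hMeas hIndep (fun j => by simp) hfg T] with ω ⟨M, hM⟩
  have hmerged : z (M * T + T) ω = Pi.single v₀ n := by
    rw [eq_pushMass_iterate_of_eq (x := (z · ω)) (F := (f · ω)) (hz ω) hM,
      pushMass_of_forall_eq hgT, sum_eq_sum_zero_of_eq_pushMass (x := (z · ω)) (hz ω)]
    simp [hz0, hcard]
  exact ⟨M * T + T, v₀, by simp [hmerged], fun i hi => by simp [hmerged, hi]⟩

/-- Almost-sure merging: in the random transmission model on a static strongly
connected digraph with `n ≥ 2` nodes (each node independently, at each step,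
sends its whole mass uniformly at random to one of its out-neighbors or keeps
it), starting from unit masses, almost surely all mass merges at a single node
in finite time. -/
theorem almost_sure_merging
    {V : Type*} [Fintype V] [DecidableEq V] [MeasurableSpace V]
    [MeasurableSingletonClass V]
    {n : ℕ} (hcard : Fintype.card V = n) (hn : 2 ≤ n)
    (Nplus : V → Finset V)                      -- out-neighborhoods
    (hNoSelf : ∀ j : V, j ∉ Nplus j)            -- no self-loops
    (hsc : ∀ a b : V, Relation.ReflTransGen (fun u v => v ∈ Nplus u) a b)
    {Ω : Type*} [MeasurableSpace Ω] (μ : Measure Ω) [IsProbabilityMeasure μ]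
    (f : ℕ → Ω → V → V)                          -- random transmission functions
    (hMeas : ∀ k j, Measurable (fun ω => f k ω j))
    (hSupp : ∀ k ω j, f k ω j ∈ insert j (Nplus j))
    (hIndep : iIndepFun (fun p : ℕ × V => fun ω => f p.1 ω p.2) μ)
    (hDist : ∀ k (j l : V),
      μ {ω | f k ω j = l} =
        if l ∈ insert j (Nplus j) then (1 : ENNReal) / (1 + (Nplus j).card) else 0)
    (z : ℕ → Ω → V → ℕ)
    (hz0 : ∀ ω j, z 0 ω j = 1)
    (hzrec : ∀ k ω l,
      z (k + 1) ω l = ∑ j ∈ Finset.univ.filter (fun j => f k ω j = l), z k ω j) :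
    ∀ᵐ ω ∂μ, ∃ k₀ : ℕ, ∃ j₀ : V,
      z k₀ ω j₀ = n ∧ ∀ i, i ≠ j₀ → z k₀ ω i = 0 :=
  almost_sure_merging_general hcard hn Nplus hsc μ f hMeas hIndep hDist z hz0 hzrec
end

section
/- (Proposition 2) Consider the random transmission model on a static strongly connected digraph G = (V, E) with n = |V| ≥ 2 nodes, with given integer initial values y_j[0] ∈ ℤ, mass variables z_j[0] = 1, y_l[k+1] = ∑_{j : f_k(j) = l} y_j[k], z_l[k+1] = ∑_{j : f_k(j) = l} z_j[k], and state variables initialized as z^s_j[0] = 1, y^s_j[0] = y_j[0] and updated by: if z_j[k+1] ≥ z^s_j[k] then z^s_j[k+1] = z_j[k+1] and y^s_j[k+1] = y_j[k+1], otherwise z^s_j[k+1] = z^s_j[k] and y^s_j[k+1] = y^s_j[k]. Then with probability one there exists a finite k₀ ∈ ℕ such that for every k ≥ k₀ and every node j: y^s_j[k] = ∑_{l} y_l[0] and z^s_j[k] = n; in particular every node's quotient q^s_j[k] = y^s_j[k] / z^s_j[k] equals the average (∑_l y_l[0]) / n of the initial values. -/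
/-!
The mass vector `z[k]` is transported by the random maps `f_k`, so its total `n` is conserved and
`y[k]` vanishes wherever `z[k]` does; hence a node holding `z`-mass `n` holds `y`-mass `∑ y[0]`, and
a node whose stored `z`-state reaches `n` keeps the pair `(n, ∑ y[0])` forever. Strong connectivity
gives, for each node `j`, a map `g` along the edges whose `N`-th iterate is constant `j`; every
block of `N + 1` consecutive steps has the same positive probability that all nodes transmit
according to `g`, and these blocks are independent, so by the second Borel–Cantelli lemma such a
block occurs almost surely, after which the whole mass sits at `j`.
-/

open MeasureTheory ProbabilityTheory Filter Finset Function

section Pushforward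

variable {α β M : Type*} [Fintype α] [DecidableEq β] [AddCommMonoid M]

def pushforward (h : α → β) (w : α → M) (b : β) : M :=
  ∑ a ∈ univ.filter (fun a => h a = b), w a

theorem sum_pushforward [Fintype β] (h : α → β) (w : α → M) :
    ∑ b, pushforward h w b = ∑ a, w a :=
  sum_fiberwise univ h w

theorem pushforward_apply_of_forall_eq {h : α → β} {b : β} (hb : ∀ a, h a = b) (w : α → M) :
    pushforward h w b = ∑ a, w a := by
  simp [pushforward, hb]

theorem pushforward_id [DecidableEq α] (w : α → M) : pushforward id w = w := by
  funext a
  simp [pushforward, filter_eq']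

theorem pushforward_comp {γ : Type*} [Fintype β] [DecidableEq γ] (h₁ : α → β) (h₂ : β → γ)
    (w : α → M) : pushforward (h₂ ∘ h₁) w = pushforward h₂ (pushforward h₁ w) := by
  funext c
  rw [pushforward, ← sum_fiberwise_of_maps_to (t := univ.filter (fun b => h₂ b = c)) (g := h₁)
    (by simp)]
  refine sum_congr rfl fun b hb => ?_
  rw [mem_filter] at hb
  simp only [pushforward, filter_filter, comp_apply]
  exact sum_congr (filter_congr fun a _ => ⟨And.right, fun h => ⟨h ▸ hb.2, h⟩⟩) fun _ _ => rfl

theorem support_pushforward_subset {N : Type*} [AddCommMonoid N] [PartialOrder N]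
    [CanonicallyOrderedAdd N] {w : α → M} {v : α → N}
    (hwv : support w ⊆ support v) (h : α → β) :
    support (pushforward h w) ⊆ support (pushforward h v) := by
  intro b hb
  obtain ⟨a, ha, hwa⟩ := exists_ne_zero_of_sum_ne_zero hb
  exact fun hv => hwv hwa (sum_eq_zero_iff.1 hv a ha)

end Pushforward

section MassTransport

variable {α M : Type*} [Fintype α] [DecidableEq α] [AddCommMonoid M]

def IsMassTransport (f : ℕ → α → α) (w : ℕ → α → M) : Prop :=
  ∀ k, w (k + 1) = pushforward (f k) (w k)

variable {f : ℕ → α → α} {w : ℕ → α → M}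

theorem IsMassTransport.sum_eq (hw : IsMassTransport f w) (k : ℕ) :
    ∑ a, w k a = ∑ a, w 0 a := by
  induction k with
  | zero => rfl
  | succ k ih => rw [hw k, sum_pushforward, ih]

theorem IsMassTransport.support_subset {N : Type*} [AddCommMonoid N] [PartialOrder N]
    [CanonicallyOrderedAdd N] {v : ℕ → α → N} (hw : IsMassTransport f w)
    (hv : IsMassTransport f v) (h0 : support (w 0) ⊆ support (v 0)) (k : ℕ) :
    support (w k) ⊆ support (v k) := by
  induction k with
  | zero => exact h0
  | succ k ih => rw [hw k, hv k]; exact support_pushforward_subset ih _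

theorem IsMassTransport.eq_pushforward_iterate (hw : IsMassTransport f w) {g : α → α}
    {s L : ℕ} (hrun : ∀ i < L, f (s + i) = g) : w (s + L) = pushforward g^[L] (w s) := by
  induction L with
  | zero => exact (pushforward_id _).symm
  | succ L ih =>
    rw [← add_assoc, hw, hrun L L.lt_succ_self, ih fun i hi => hrun i (by omega),
      ← pushforward_comp, iterate_succ']

end MassTransport

theorem apply_eq_sum_of_support_subset {α M : Type*} [Fintype α] [AddCommMonoid M]
    {w : α → M} {v : α → ℕ} (hwv : support w ⊆ support v) {a : α}
    (ha : v a = ∑ b, v b) : w a = ∑ b, w b := by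
  classical
  have hrest : ∑ b ∈ univ.erase a, v b = 0 := by
    have := add_sum_erase univ v (mem_univ a)
    omega
  refine (sum_eq_single a (fun b _ hb => ?_) (by simp)).symm
  exact notMem_support.1 fun hw =>
    hwv hw (sum_eq_zero_iff.1 hrest b (mem_erase.2 ⟨hb, mem_univ b⟩))

theorem state_eq_of_full_mass {β : Type*} (z zs : ℕ → ℕ) (y ys : ℕ → β) {n : ℕ} {S : β}
    (hstate : ∀ k, (zs (k + 1), ys (k + 1)) =
      if z (k + 1) ≥ zs k then (z (k + 1), y (k + 1)) else (zs k, ys k))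
    (hzs0 : zs 0 ≤ n) (hz : ∀ k, z k ≤ n) (hy : ∀ k, z k = n → y k = S)
    {k₀ : ℕ} (hk₀ : z (k₀ + 1) = n) {k : ℕ} (hk : k₀ < k) : zs k = n ∧ ys k = S := by
  have hzs : ∀ k, zs k ≤ n := by
    intro k
    induction k with
    | zero => exact hzs0
    | succ k ih =>
      have := hstate k
      split_ifs at this <;> rw [Prod.mk.injEq] at this
      · exact this.1 ▸ hz _
      · exact this.1 ▸ ih
  have hstep : ∀ k, z (k + 1) = n ∨ (zs k = n ∧ ys k = S) →
      zs (k + 1) = n ∧ ys (k + 1) = S := by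
    intro k hk
    have := hstate k
    split_ifs at this with hge <;> rw [Prod.mk.injEq] at this
    · have hzn : z (k + 1) = n := hk.elim id fun h => le_antisymm (hz _) (h.1 ▸ hge)
      exact ⟨this.1.trans hzn, this.2.trans (hy _ hzn)⟩
    · have hzn : z (k + 1) ≠ n := fun h => hge (h ▸ hzs k)
      exact ⟨this.1.trans (hk.resolve_left hzn).1, this.2.trans (hk.resolve_left hzn).2⟩
  induction k, hk using Nat.le_induction with
  | base => exact hstep k₀ (Or.inl hk₀)
  | succ k _ ih => exact hstep k (Or.inr ih)

def ReachesIn {V : Type*} (r : V → V → Prop) (j : V) : ℕ → V → Prop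
  | 0, u => u = j
  | k + 1, u => ∃ v, r u v ∧ ReachesIn r j k v

theorem exists_reachesIn_of_reflTransGen {V : Type*} {r : V → V → Prop} {u j : V}
    (h : Relation.ReflTransGen r u j) : ∃ k, ReachesIn r j k u := by
  induction h using Relation.ReflTransGen.head_induction_on with
  | refl => exact ⟨0, rfl⟩
  | head hr _ ih =>
    obtain ⟨k, hk⟩ := ih
    exact ⟨k + 1, _, hr, hk⟩

theorem exists_iterate_eq_of_forall_reflTransGen {V : Type*} [Finite V] {r : V → V → Prop}
    {j : V} (h : ∀ u, Relation.ReflTransGen r u j) :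
    ∃ g : V → V, (∀ u, g u = u ∨ r u (g u)) ∧ ∃ N, ∀ u, g^[N] u = j := by
  classical
  have hex : ∀ u, ∃ k, ReachesIn r j k u := fun u => exists_reachesIn_of_reflTransGen (h u)
  let d : V → ℕ := fun u => Nat.find (hex u)
  have hdj : ∀ u, d u = 0 → u = j := fun u hu => by
    have hs := Nat.find_spec (hex u)
    rwa [show Nat.find (hex u) = 0 from hu] at hs
  have hdesc : ∀ u, u ≠ j → ∃ v, r u v ∧ d v < d u := by
    intro u hu
    obtain ⟨k, hk⟩ := Nat.exists_eq_succ_of_ne_zero fun h0 => hu (hdj u h0)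
    have hs := Nat.find_spec (hex u)
    rw [show Nat.find (hex u) = k + 1 from hk] at hs
    obtain ⟨v, huv, hv⟩ := hs
    exact ⟨v, huv, hk ▸ Nat.lt_succ_of_le (Nat.find_min' (hex v) hv)⟩
  choose! g hgr hgd using hdesc
  let g' : V → V := fun u => if u = j then j else g u
  have hiter : ∀ k u, d u ≤ k → g'^[k] u = j := by
    intro k
    induction k with
    | zero => exact fun u hu => hdj u (Nat.le_zero.1 hu)
    | succ k ih =>
      intro u hu
      rw [iterate_succ_apply]
      by_cases huj : u = j
      · simp only [g', huj, if_true]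
        exact iterate_fixed (by simp) k
      · simp only [g', huj, if_false]
        exact ih _ (by have := hgd u huj; omega)
  obtain ⟨N, hN⟩ := (Set.finite_range d).bddAbove
  refine ⟨g', fun u => ?_, N, fun u => hiter N u (hN ⟨u, rfl⟩)⟩
  by_cases huj : u = j
  · simp [g', huj]
  · simp only [g', huj, if_false]
    exact Or.inr (hgr u huj)

theorem ProbabilityTheory.iIndepSet.biInter_of_pairwise_disjoint {Ω ι κ : Type*}
    [MeasurableSpace Ω] {μ : Measure Ω} {E : ι → Set Ω} (hE : iIndepSet E μ)
    (hEm : ∀ i, MeasurableSet (E i)) {I : κ → Finset ι} (hI : Pairwise (Disjoint on I)) :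
    iIndepSet (fun k => ⋂ i ∈ I k, E i) μ := by
  classical
  rw [iIndepSet_iff_meas_biInter fun k => Finset.measurableSet_biInter _ fun i _ => hEm i]
  intro s
  rw [← set_biInter_biUnion, hE.meas_biInter, prod_biUnion (hI.set_pairwise _)]
  exact prod_congr rfl fun k _ => (hE.meas_biInter _).symm

theorem ae_exists_run_eq {Ω α β : Type*} [Fintype α] [MeasurableSpace β]
    [MeasurableSingletonClass β] [MeasurableSpace Ω] {μ : Measure Ω} [IsProbabilityMeasure μ]
    {f : ℕ → Ω → α → β} (hMeas : ∀ k a, Measurable fun ω => f k ω a)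
    (hIndep : iIndepFun (fun p : ℕ × α => fun ω => f p.1 ω p.2) μ) (g : α → β)
    (hstat : ∀ k a, μ {ω | f k ω a = g a} = μ {ω | f 0 ω a = g a})
    (hpos : ∀ a, μ {ω | f 0 ω a = g a} ≠ 0) (L : ℕ) :
    ∀ᵐ ω ∂μ, ∃ s, ∀ i < L, ∀ a, f (s + i) ω a = g a := by
  let E : ℕ × α → Set Ω := fun p => {ω | f p.1 ω p.2 = g p.2}
  have hEm : ∀ p, MeasurableSet (E p) := fun p => hMeas p.1 p.2 (measurableSet_singleton _)
  have hE : iIndepSet E μ := (iIndepSet_iff_meas_biInter hEm).2 fun s =>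
    hIndep.meas_biInter fun p _ => ⟨{g p.2}, measurableSet_singleton _, rfl⟩
  let I : ℕ → Finset (ℕ × α) := fun m => Ico (m * L) (m * L + L) ×ˢ univ
  have hI : Pairwise (Disjoint on I) := by
    refine (pairwise_disjoint_on I).2 fun m m' hm => disjoint_left.2 fun p hp hp' => ?_
    simp only [I, mem_product, mem_Ico] at hp hp'
    have : m * L + L ≤ m' * L := by rw [← Nat.succ_mul]; exact Nat.mul_le_mul_right L hm
    omega
  let B : ℕ → Set Ω := fun m => ⋂ p ∈ I m, E p
  have hBm : ∀ m, MeasurableSet (B m) := fun m => Finset.measurableSet_biInter _ fun p _ => hEm p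
  have hB : ∀ m, μ (B m) = (∏ a, μ {ω | f 0 ω a = g a}) ^ L := by
    intro m
    rw [hE.meas_biInter, prod_product,
      prod_congr rfl fun t _ => prod_congr rfl fun a _ => hstat t a, prod_const, Nat.card_Ico,
      Nat.add_sub_cancel_left]
  have hlimsup : μ (limsup B atTop) = 1 := by
    refine measure_limsup_eq_one hBm (hE.biInter_of_pairwise_disjoint hEm hI) ?_
    simp_rw [hB]
    exact ENNReal.tsum_const_eq_top_of_ne_zero
      (pow_ne_zero _ (prod_ne_zero_iff.2 fun a _ => hpos a))
  have hae : ∀ᵐ ω ∂μ, ω ∈ limsup B atTop :=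
    (ae_mem_iff_measure_eq (MeasurableSet.measurableSet_limsup hBm).nullMeasurableSet).2
      (by rw [hlimsup, measure_univ])
  filter_upwards [hae] with ω hω
  obtain ⟨m, hm⟩ := (mem_limsup_iff_frequently_mem.1 hω).exists
  refine ⟨m * L, fun i hi a => ?_⟩
  simp only [B, I, E, Set.mem_iInter, mem_product, mem_Ico, mem_univ, and_true] at hm
  exact hm (m * L + i, a) ⟨by omega, by omega⟩

theorem ae_exists_mass_concentrated {Ω V M : Type*} [Fintype V] [DecidableEq V]
    [MeasurableSpace V] [MeasurableSingletonClass V] [MeasurableSpace Ω] {μ : Measure Ω}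
    [IsProbabilityMeasure μ] [AddCommMonoid M] {r : V → V → Prop} {j : V}
    (hreach : ∀ u, Relation.ReflTransGen r u j) {f : ℕ → Ω → V → V}
    (hMeas : ∀ k u, Measurable fun ω => f k ω u)
    (hIndep : iIndepFun (fun p : ℕ × V => fun ω => f p.1 ω p.2) μ)
    (hstat : ∀ k u v, μ {ω | f k ω u = v} = μ {ω | f 0 ω u = v})
    (hpos : ∀ u v, v = u ∨ r u v → μ {ω | f 0 ω u = v} ≠ 0)
    {w : ℕ → Ω → V → M} (hw : ∀ ω, IsMassTransport (f · ω) (w · ω)) :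
    ∀ᵐ ω ∂μ, ∃ k, w (k + 1) ω j = ∑ u, w 0 ω u := by
  obtain ⟨g, hg, N, hN⟩ := exists_iterate_eq_of_forall_reflTransGen hreach
  filter_upwards [ae_exists_run_eq hMeas hIndep g (fun k u => hstat k u (g u))
    (fun u => hpos u (g u) (hg u)) (N + 1)] with ω ⟨s, hs⟩
  refine ⟨s + N, ?_⟩
  rw [add_assoc, (hw ω).eq_pushforward_iterate fun i hi => funext (hs i hi),
    pushforward_apply_of_forall_eq fun u => by rw [iterate_succ_apply, hN],
    (hw ω).sum_eq]

theorem randomized_quantized_average_consensus_general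
    {V : Type*} [Fintype V] [DecidableEq V] [MeasurableSpace V]
    [MeasurableSingletonClass V]
    {n : ℕ} (hcard : Fintype.card V = n) (hn : 2 ≤ n)
    (Nplus : V → Finset V)                      -- out-neighborhoods
    (hsc : ∀ a b : V, Relation.ReflTransGen (fun u v => v ∈ Nplus u) a b)
    {Ω : Type*} [MeasurableSpace Ω] (μ : Measure Ω) [IsProbabilityMeasure μ]
    (f : ℕ → Ω → V → V)                          -- random transmission functions
    (hMeas : ∀ k j, Measurable (fun ω => f k ω j))
    (hIndep : iIndepFun
      (fun p : ℕ × V => fun ω => f p.1 ω p.2) μ)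
    (hDist : ∀ k (j l : V),
      μ {ω | f k ω j = l} =
        if l ∈ insert j (Nplus j) then (1 : ENNReal) / (1 + (Nplus j).card) else 0)
    (y0 : V → ℤ)                                 -- initial values
    (y : ℕ → Ω → V → ℤ) (z : ℕ → Ω → V → ℕ)      -- mass variables
    (ys : ℕ → Ω → V → ℤ) (zs : ℕ → Ω → V → ℕ)    -- state variables
    (hy0 : ∀ ω j, y 0 ω j = y0 j)
    (hz0 : ∀ ω j, z 0 ω j = 1)
    (hzs0 : ∀ ω j, zs 0 ω j = 1)
    (hyrec : ∀ k ω l,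
      y (k + 1) ω l = ∑ j ∈ Finset.univ.filter (fun j => f k ω j = l), y k ω j)
    (hzrec : ∀ k ω l,
      z (k + 1) ω l = ∑ j ∈ Finset.univ.filter (fun j => f k ω j = l), z k ω j)
    (hstate : ∀ k ω j,
      (zs (k + 1) ω j, ys (k + 1) ω j) =
        if z (k + 1) ω j ≥ zs k ω j
        then (z (k + 1) ω j, y (k + 1) ω j)
        else (zs k ω j, ys k ω j)) :
    ∀ᵐ ω ∂μ, ∃ k₀ : ℕ, ∀ k ≥ k₀, ∀ j : V,
      ys k ω j = ∑ l, y0 l ∧ zs k ω j = n ∧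
      (ys k ω j : ℚ) / (zs k ω j : ℚ) = (∑ l, y0 l : ℤ) / (n : ℚ) := by
  have hz : ∀ ω, IsMassTransport (f · ω) (z · ω) := fun ω k => funext (hzrec k ω)
  have hy : ∀ ω, IsMassTransport (f · ω) (y · ω) := fun ω k => funext (hyrec k ω)
  have hzsum : ∀ k ω, ∑ l, z k ω l = n := fun k ω => by
    rw [(hz ω).sum_eq]
    simp [hz0, hcard]
  have hfull : ∀ k ω l, z k ω l = n → y k ω l = ∑ l, y0 l := by
    intro k ω l hl
    have hsupp := (hy ω).support_subset (hz ω) (by simp [hz0]) k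
    rw [apply_eq_sum_of_support_subset hsupp (hl.trans (hzsum k ω).symm), (hy ω).sum_eq]
    simp [hy0]
  have hconc : ∀ j, ∀ᵐ ω ∂μ, ∃ k, z (k + 1) ω j = n := fun j => by
    simpa only [hzsum 0] using ae_exists_mass_concentrated (hsc · j) hMeas hIndep
      (fun k u v => by rw [hDist, hDist])
      (fun u v huv => by rw [hDist, if_pos (mem_insert.2 huv)]; simp) hz
  filter_upwards [ae_all_iff.2 hconc] with ω hω
  choose k hk using hω
  refine ⟨univ.sup k + 1, fun t ht j => ?_⟩
  obtain ⟨hzs, hys⟩ := state_eq_of_full_mass (z · ω j) (zs · ω j) (y · ω j) (ys · ω j)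
    (hstate · ω j) (by rw [hzs0]; omega)
    (fun k => hzsum k ω ▸ single_le_sum (fun _ _ => Nat.zero_le _) (mem_univ j)) (hfull · ω j)
    (hk j) (Nat.lt_succ_of_le (le_sup (f := k) (mem_univ j)) |>.trans_le ht)
  exact ⟨hys, hzs, by rw [hys, hzs]⟩

/-- Proposition 2: in the random transmission model on a static strongly
connected digraph with `n ≥ 2` nodes, running the probabilistic quantized
averaging algorithm (mass variables `y, z` transferred and summed at random,
state variables `yˢ, zˢ` overwritten whenever the received `z`-mass is at least
the stored `z`-state), with probability one there is a finite time `k₀` after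
which every node's state variables equal `(∑ l, y_l[0], n)`, so every node's
quotient `yˢ/zˢ` equals the average of the initial values. -/
theorem randomized_quantized_average_consensus
    {V : Type*} [Fintype V] [DecidableEq V] [MeasurableSpace V]
    [MeasurableSingletonClass V]
    {n : ℕ} (hcard : Fintype.card V = n) (hn : 2 ≤ n)
    (Nplus : V → Finset V)                      -- out-neighborhoods
    (hNoSelf : ∀ j : V, j ∉ Nplus j)            -- no self-loops
    (hsc : ∀ a b : V, Relation.ReflTransGen (fun u v => v ∈ Nplus u) a b)
    {Ω : Type*} [MeasurableSpace Ω] (μ : Measure Ω) [IsProbabilityMeasure μ]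
    (f : ℕ → Ω → V → V)                          -- random transmission functions
    (hMeas : ∀ k j, Measurable (fun ω => f k ω j))
    (hSupp : ∀ k ω j, f k ω j ∈ insert j (Nplus j))
    (hIndep : iIndepFun
      (fun p : ℕ × V => fun ω => f p.1 ω p.2) μ)
    (hDist : ∀ k (j l : V),
      μ {ω | f k ω j = l} =
        if l ∈ insert j (Nplus j) then (1 : ENNReal) / (1 + (Nplus j).card) else 0)
    (y0 : V → ℤ)                                 -- initial values
    (y : ℕ → Ω → V → ℤ) (z : ℕ → Ω → V → ℕ)      -- mass variables
    (ys : ℕ → Ω → V → ℤ) (zs : ℕ → Ω → V → ℕ)    -- state variables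
    (hy0 : ∀ ω j, y 0 ω j = y0 j)
    (hz0 : ∀ ω j, z 0 ω j = 1)
    (hys0 : ∀ ω j, ys 0 ω j = y0 j)
    (hzs0 : ∀ ω j, zs 0 ω j = 1)
    (hyrec : ∀ k ω l,
      y (k + 1) ω l = ∑ j ∈ Finset.univ.filter (fun j => f k ω j = l), y k ω j)
    (hzrec : ∀ k ω l,
      z (k + 1) ω l = ∑ j ∈ Finset.univ.filter (fun j => f k ω j = l), z k ω j)
    (hstate : ∀ k ω j,
      (zs (k + 1) ω j, ys (k + 1) ω j) =
        if z (k + 1) ω j ≥ zs k ω j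
        then (z (k + 1) ω j, y (k + 1) ω j)
        else (zs k ω j, ys k ω j)) :
    ∀ᵐ ω ∂μ, ∃ k₀ : ℕ, ∀ k ≥ k₀, ∀ j : V,
      ys k ω j = ∑ l, y0 l ∧ zs k ω j = n ∧
      (ys k ω j : ℚ) / (zs k ω j : ℚ) = (∑ l, y0 l : ℤ) / (n : ℚ) :=
  randomized_quantized_average_consensus_general hcard hn Nplus hsc μ f hMeas hIndep hDist y0 y z ys
    zs hy0 hz0 hzs0 hyrec hzrec hstate
end
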